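/- arXiv:2007.06605 — 3 statements merged into one kernel-verified Lean document; each statement's English description precedes it below -/
import Mathlib

section
/- In the protocol A_sldw with n clients each performing a random check-in with probability 1 into the sliding window {j, …, j+m−1} and the server performing n−m+1 update steps starting at time m, the expected number of update steps at which no client has checked in (i.e., the expected number of dummy gradient updates performed by the server) is at most (n − m + 1)/e. -/
open MeasureTheory Real
open scoped ENNReal

universe u v

noncomputable section

/-- `(ε, δ)`-differential privacy for `PMF`-valued mechanisms with respect to a
neighboring relation on inputs. -/
def DPFor {α : Type u} {Ω : Type v} (neighbor : α → α → Prop) (A : α → PMF Ω)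
    (ε δ : ℝ) : Prop :=
  ∀ D D', neighbor D D' → ∀ S : Set Ω,
    (A D).toOuterMeasure S ≤
      ENNReal.ofReal (Real.exp ε) * (A D').toOuterMeasure S + ENNReal.ofReal δ

/-- Datasets differing in at most one entry. -/
def Neighbor {n : ℕ} {𝒟 : Type u} (D D' : Fin n → 𝒟) : Prop :=
  ∃ i, ∀ j, j ≠ i → D j = D' j

/-- Datasets differing only (possibly) at the fixed index `i`. -/
def NeighborAt {n : ℕ} {𝒟 : Type u} (i : Fin n) (D D' : Fin n → 𝒟) : Prop :=
  ∀ j, j ≠ i → D j = D' j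

/-- An `(ε, δ)`-DP local randomizer: the DP guarantee holds for every pair of records. -/
def LocalDP {𝒟 : Type u} {Ω : Type v} (A : 𝒟 → PMF Ω) (ε δ : ℝ) : Prop :=
  ∀ d d', ∀ S : Set Ω,
    (A d).toOuterMeasure S ≤
      ENNReal.ofReal (Real.exp ε) * (A d').toOuterMeasure S + ENNReal.ofReal δ

/-- Independent product of finitely many PMFs. -/
def pmfPi : ∀ (n : ℕ) {α : Type u}, (Fin n → PMF α) → PMF (Fin n → α)
  | 0, _, _ => PMF.pure fun i => i.elim0
  | n + 1, _, p =>
      (p 0).bind fun x =>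
        (pmfPi n fun i => p i.succ).bind fun xs => PMF.pure (Fin.cons x xs)

/-- Run a randomized state-update step sequentially over a list of indices, returning the
sequence of all produced states. -/
def chain {Θ : Type u} {ι : Type v} (step : ι → Θ → PMF Θ) : List ι → Θ → PMF (List Θ)
  | [], _ => PMF.pure []
  | i :: is, θ =>
      (step i θ).bind fun θ' => (chain step is θ').bind fun rest => PMF.pure (θ' :: rest)

/-- Sum of independent samples from the given PMFs. -/
def sumPMF {G : Type u} {ι : Type v} [AddCommMonoid G] (f : ι → PMF G) : List ι → PMF G
  | [] => PMF.pure 0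
  | i :: is => (f i).bind fun x => (sumPMF f is).bind fun s => PMF.pure (x + s)

/-- The uniform distribution on `Fin m` (for `0 < m`). -/
def uniformFin (m : ℕ) (hm : 0 < m) : PMF (Fin m) :=
  haveI : Nonempty (Fin m) := Fin.pos_iff_nonempty.mp hm
  PMF.uniformOfFintype (Fin m)

/-- A single client's random check-in choice: with probability `p0`, check in at a
uniformly random time step in `[m]`; otherwise abstain (`none`). -/
def checkinOne (m : ℕ) (hm : 0 < m) (p0 : ℝ) : PMF (Option (Fin m)) :=
  (PMF.bernoulli (min (Real.toNNReal p0) 1) (min_le_right _ _)).bind fun b =>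
    if b then (uniformFin m hm).map some else PMF.pure none

/-- Adaptive sequential composition of PMF-valued mechanisms on a common input `x`;
the `i`-th mechanism sees the outputs of all previous ones. -/
def adCompD {α : Type u} (S : ℕ → Type v)
    (A : ∀ i : ℕ, (∀ j, j < i → S j) → α → PMF (S i)) (x : α) :
    ∀ k : ℕ, PMF (∀ j, j < k → S j)
  | 0 => PMF.pure fun _ h => absurd h (Nat.not_lt_zero _)
  | k + 1 =>
      (adCompD S A x k).bind fun s =>
        (A k s x).bind fun y =>
          PMF.pure fun j h =>
            if hj : j < k then s j hj else cast (congrArg S (by omega : j = k)).symm y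

/-- The distributed DP-SGD protocol with random check-ins into a fixed window
(Algorithm `A_fix`): every client independently performs a `([m], p0)`-check-in; at each
time step the server picks a uniformly random checked-in client (if any), receives the
privatized gradient from the local randomizer `Aldp` (a dummy privatized zero gradient if
no client checked in) and performs a gradient step; all `m` models are released. -/
def Afix {𝒟 Θ : Type u} [AddCommGroup Θ] [Module ℝ Θ] (n m : ℕ) (hm : 0 < m)
    (Aldp : Θ → PMF Θ) (grad : 𝒟 → Θ → Θ) (η : ℝ) (θ1 : Θ) (p0 : ℝ)
    (D : Fin n → 𝒟) : PMF (List Θ) :=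
  (pmfPi n fun _ => checkinOne m hm p0).bind fun c =>
    chain
      (fun (i : Fin m) θ =>
        let S : Finset (Fin n) := Finset.univ.filter fun j => c j = some i
        if hS : S.Nonempty then
          (PMF.uniformOfFinset S hS).bind fun J =>
            (Aldp (grad (D J) θ)).map fun g => θ - η • g
        else (Aldp 0).map fun g => θ - η • g)
      (List.finRange m) θ1

lemma pmfPi_apply (n : ℕ) : ∀ {α : Type u} (p : Fin n → PMF α) (u : Fin n → α),
    pmfPi n p u = ∏ i, p i (u i) := by
  induction n with
  | zero =>
    intro α p u
    simp only [pmfPi, PMF.pure_apply, Finset.univ_eq_empty, Finset.prod_empty]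
    rw [if_pos (funext fun i => i.elim0)]
  | succ n ih =>
    intro α p u
    simp only [pmfPi, PMF.bind_apply, PMF.pure_apply]
    rw [tsum_eq_single (u 0)]
    · rw [tsum_eq_single (Fin.tail u)]
      · rw [if_pos (Fin.cons_self_tail u).symm, mul_one, ih, Fin.prod_univ_succ]
        rfl
      · intro xs hxs
        rw [if_neg, mul_zero]
        intro h
        exact hxs (by rw [h]; simp)
    · intro x hx
      convert mul_zero _ using 2
      rw [ENNReal.tsum_eq_zero]
      intro xs
      rw [if_neg, mul_zero]
      intro h
      exact hx (by rw [h]; simp)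

/-- **Proposition 4.4 (Dummy updates in random check-ins with sliding windows).**
With `n` clients, client `j` checking in uniformly within the window
`{j, …, j+m-1}` (0-indexed times), the expected number of the `n - m + 1` server update
steps `m-1, …, n-1` at which no client checked in is at most `(n - m + 1)/e`. -/
theorem expected_dummy_updates_sliding_window
    (n m : ℕ) (hm : 0 < m) (hmn : m ≤ n) :
    (∑' u : Fin n → Fin m,
        (pmfPi n fun _ => uniformFin m hm) u *
          (((Finset.range (n - m + 1)).filter fun t =>
              ∀ j : Fin n, (j : ℕ) + (u j : ℕ) ≠ m - 1 + t).card : ℝ≥0∞)) ≤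
      ENNReal.ofReal ((n - m + 1 : ℕ) / Real.exp 1) := by
  have hm0 : (m : ℝ≥0∞) ≠ 0 := by exact_mod_cast hm.ne'
  have hmtop : (m : ℝ≥0∞) ≠ ⊤ := ENNReal.natCast_ne_top m
  have hP : ∀ u : Fin n → Fin m,
      (pmfPi n fun _ => uniformFin m hm) u = ((m : ℝ≥0∞))⁻¹ ^ n := by
    intro u
    rw [pmfPi_apply]
    simp [uniformFin, PMF.uniformOfFintype_apply]
  -- abbreviations
  set C : ℝ≥0∞ := ((m : ℝ≥0∞))⁻¹ ^ n with hC
  -- per-j allowed sets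
  have key : ∀ t ∈ Finset.range (n - m + 1),
      C * ((Finset.univ.filter fun u : Fin n → Fin m =>
        ∀ j : Fin n, (j : ℕ) + (u j : ℕ) ≠ m - 1 + t).card : ℝ≥0∞)
      ≤ ENNReal.ofReal (Real.exp (-1)) := by
    intro t ht
    rw [Finset.mem_range] at ht
    have htn : t ≤ n - m := by omega
    set A : Fin n → Finset (Fin m) :=
      fun j => Finset.univ.filter fun v : Fin m => (j : ℕ) + (v : ℕ) ≠ m - 1 + t with hA
    have hfilter : (Finset.univ.filter fun u : Fin n → Fin m =>
        ∀ j : Fin n, (j : ℕ) + (u j : ℕ) ≠ m - 1 + t) = Fintype.piFinset A := by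
      ext u
      simp [hA, Fintype.mem_piFinset]
    rw [hfilter, Fintype.card_piFinset, Nat.cast_prod]
    have hCprod : C = ∏ _j : Fin n, ((m : ℝ≥0∞))⁻¹ := by
      simp [hC]
    rw [hCprod, ← Finset.prod_mul_distrib]
    set c : Fin n → ℝ≥0∞ := fun j => ((m : ℝ≥0∞))⁻¹ * ((A j).card : ℝ≥0∞) with hc
    have hc1 : ∀ j, c j ≤ 1 := by
      intro j
      have : ((A j).card : ℝ≥0∞) ≤ (m : ℝ≥0∞) := by
        have := Finset.card_filter_le (Finset.univ : Finset (Fin m))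
          (fun v : Fin m => (j : ℕ) + (v : ℕ) ≠ m - 1 + t)
        exact_mod_cast this.trans_eq (by simp)
      calc c j ≤ ((m : ℝ≥0∞))⁻¹ * (m : ℝ≥0∞) := by
            rw [hc]; exact mul_le_mul_right this _
        _ = 1 := ENNReal.inv_mul_cancel hm0 hmtop
    -- window
    set W : Finset (Fin n) :=
      Finset.univ.filter fun j : Fin n => t ≤ (j : ℕ) ∧ (j : ℕ) ≤ m - 1 + t with hW
    have hWcard : m ≤ W.card := by
      have hlt : ∀ i : Fin m, t + (i : ℕ) < n := fun i => by have := i.isLt; omega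
      have hcard := Finset.card_le_card_of_injOn
        (f := fun i : Fin m => (⟨t + i, hlt i⟩ : Fin n))
        (s := Finset.univ) (t := W)
        (fun i _ => by
          have := i.isLt
          simp only [hW, Finset.mem_filter, Finset.mem_univ, true_and, Fin.val_mk, Finset.mem_coe]
          omega)
        (fun i₁ _ i₂ _ h => by
          have hval : t + (i₁ : ℕ) = t + (i₂ : ℕ) := congrArg Fin.val h
          exact Fin.ext (by omega))
      simpa using hcard
    have hcW : ∀ j ∈ W, c j = ((m : ℝ≥0∞))⁻¹ * ((m - 1 : ℕ) : ℝ≥0∞) := by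
      intro j hj
      rw [hW, Finset.mem_filter] at hj
      obtain ⟨-, hj1, hj2⟩ := hj
      have hv0 : m - 1 + t - (j : ℕ) < m := by omega
      have hAj : A j = Finset.univ.erase ⟨m - 1 + t - (j : ℕ), hv0⟩ := by
        ext v
        have := v.isLt
        simp only [hA, Finset.mem_filter, Finset.mem_univ, true_and, Finset.mem_erase,
          and_true]
        rw [ne_eq, ne_eq, Fin.ext_iff]
        simp only [Fin.val_mk]
        constructor <;> intro h <;> omega
      show ((m : ℝ≥0∞))⁻¹ * (((A j).card : ℕ) : ℝ≥0∞) = _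
      rw [hAj, Finset.card_erase_of_mem (Finset.mem_univ _), Finset.card_univ,
        Fintype.card_fin]
    calc ∏ j : Fin n, c j
        = (∏ j ∈ Finset.univ \ W, c j) * ∏ j ∈ W, c j := by
          rw [Finset.prod_sdiff (Finset.subset_univ W)]
      _ ≤ 1 * ∏ j ∈ W, c j := by
          gcongr
          exact Finset.prod_le_one (fun j _ => zero_le) (fun j _ => hc1 j)
      _ = ∏ j ∈ W, c j := one_mul _
      _ = (((m : ℝ≥0∞))⁻¹ * ((m - 1 : ℕ) : ℝ≥0∞)) ^ W.card := by
          rw [Finset.prod_congr rfl hcW, Finset.prod_const]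
      _ ≤ (((m : ℝ≥0∞))⁻¹ * ((m - 1 : ℕ) : ℝ≥0∞)) ^ m := by
          apply pow_le_pow_of_le_one zero_le _ hWcard
          calc ((m : ℝ≥0∞))⁻¹ * ((m - 1 : ℕ) : ℝ≥0∞) ≤ ((m : ℝ≥0∞))⁻¹ * (m : ℝ≥0∞) := by
                gcongr; exact_mod_cast Nat.sub_le m 1
            _ = 1 := ENNReal.inv_mul_cancel hm0 hmtop
      _ ≤ ENNReal.ofReal (Real.exp (-1)) := by
          have h0 : (0 : ℝ) < m := by exact_mod_cast hm
          have hbase : ((m : ℝ≥0∞))⁻¹ * ((m - 1 : ℕ) : ℝ≥0∞)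
              = ENNReal.ofReal (((m - 1 : ℕ) : ℝ) / m) := by
            rw [ENNReal.ofReal_div_of_pos h0, ENNReal.ofReal_natCast,
              ENNReal.ofReal_natCast, div_eq_mul_inv, mul_comm]
          rw [hbase, ← ENNReal.ofReal_pow (by positivity)]
          apply ENNReal.ofReal_le_ofReal
          have hb : ((m - 1 : ℕ) : ℝ) / m ≤ Real.exp (-(1 / m)) := by
            have h1 := Real.add_one_le_exp (-(1 / m : ℝ))
            have h2 : ((m - 1 : ℕ) : ℝ) / m = 1 - 1 / m := by
              rw [Nat.cast_sub (show 1 ≤ m from hm), Nat.cast_one]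
              field_simp
            rw [h2]
            linarith
          calc (((m - 1 : ℕ) : ℝ) / m) ^ m ≤ (Real.exp (-(1 / m))) ^ m :=
                pow_le_pow_left₀ (by positivity) hb m
            _ = Real.exp (-1) := by
                rw [← Real.exp_nat_mul]
                congr 1
                field_simp
  -- main computation
  calc (∑' u : Fin n → Fin m,
        (pmfPi n fun _ => uniformFin m hm) u *
          (((Finset.range (n - m + 1)).filter fun t =>
              ∀ j : Fin n, (j : ℕ) + (u j : ℕ) ≠ m - 1 + t).card : ℝ≥0∞))
      = ∑ u : Fin n → Fin m, ∑ t ∈ Finset.range (n - m + 1),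
          C * (if ∀ j : Fin n, (j : ℕ) + (u j : ℕ) ≠ m - 1 + t then 1 else 0) := by
        rw [tsum_fintype]
        refine Finset.sum_congr rfl fun u _ => ?_
        rw [hP u, Finset.card_filter, Nat.cast_sum, Finset.mul_sum]
        refine Finset.sum_congr rfl fun t _ => ?_
        split <;> simp
    _ = ∑ t ∈ Finset.range (n - m + 1), C *
          ((Finset.univ.filter fun u : Fin n → Fin m =>
            ∀ j : Fin n, (j : ℕ) + (u j : ℕ) ≠ m - 1 + t).card : ℝ≥0∞) := by
        rw [Finset.sum_comm]
        refine Finset.sum_congr rfl fun t _ => ?_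
        rw [← Finset.mul_sum, Finset.sum_boole]
    _ ≤ ∑ _t ∈ Finset.range (n - m + 1), ENNReal.ofReal (Real.exp (-1)) :=
        Finset.sum_le_sum key
    _ = ((n - m + 1 : ℕ) : ℝ≥0∞) * ENNReal.ofReal (Real.exp (-1)) := by
        rw [Finset.sum_const, Finset.card_range, nsmul_eq_mul]
    _ = ENNReal.ofReal ((n - m + 1 : ℕ) / Real.exp 1) := by
        rw [← ENNReal.ofReal_natCast, ← ENNReal.ofReal_mul (by positivity),
          Real.exp_neg, div_eq_mul_inv]

end
end

section
/- Let A_ldp : D → S be an ε0-DP local randomizer. For a dataset D = (d_1,…,d_m) ∈ D^m, q ∈ (0,1), and k ∈ [m], let BiasedSampling_q(D, k) return d_k with probability q and, with probability 1−q, a sample from an arbitrary distribution over D ∖ {d_k}. Then for every k ∈ [m] and every measurable set S of outcomes, Pr[A_ldp(d_k) ∈ S] ≤ (e^{ε0}/(1 + q·(e^{ε0}−1))) · Pr[A_ldp(BiasedSampling_q(D, k)) ∈ S]. -/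
open MeasureTheory Real
open scoped ENNReal

universe u v

noncomputable section

/-- **Lemma A.1 (Biased sampling).** If `Aldp` is an `ε0`-DP local randomizer and
`BiasedSampling_q(D, k)` returns `d_k` with probability `q` and otherwise a sample from
an arbitrary distribution (weights `w`, supported off `k`) over `D ∖ {d_k}`, then for
every outcome set `S`,
`Pr[Aldp(d_k) ∈ S] ≤ (e^{ε0} / (1 + q(e^{ε0}-1))) · Pr[Aldp(BiasedSampling_q(D,k)) ∈ S]`. -/
theorem biased_sampling_bound
    {𝒟 : Type u} {Ω : Type v} (Aldp : 𝒟 → PMF Ω) (ε0 : ℝ)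
    (hAldp : LocalDP Aldp ε0 0)
    (m : ℕ) (D : Fin m → 𝒟) (q : ℝ) (hq : q ∈ Set.Ioo (0 : ℝ) 1) (k : Fin m)
    (w : Fin m → ℝ≥0∞) (hwk : w k = 0) (hw : ∑ j, w j = 1) :
    ∀ S : Set Ω,
      (Aldp (D k)).toOuterMeasure S ≤
        ENNReal.ofReal (Real.exp ε0 / (1 + q * (Real.exp ε0 - 1))) *
          (ENNReal.ofReal q * (Aldp (D k)).toOuterMeasure S +
            ENNReal.ofReal (1 - q) * ∑ j, w j * (Aldp (D j)).toOuterMeasure S) := by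
  intro S
  obtain ⟨hq0, hq1⟩ := hq
  set a := (Aldp (D k)).toOuterMeasure S with ha
  set c := ENNReal.ofReal (Real.exp (-ε0)) with hc
  have hE : (0:ℝ) < Real.exp ε0 := Real.exp_pos _
  have hden : (0:ℝ) < 1 + q * (Real.exp ε0 - 1) := by nlinarith
  have hb : ∀ j, a * c ≤ (Aldp (D j)).toOuterMeasure S := by
    intro j
    have h := hAldp (D k) (D j) S
    rw [ENNReal.ofReal_zero, add_zero] at h
    calc a * c ≤ (ENNReal.ofReal (Real.exp ε0) * (Aldp (D j)).toOuterMeasure S) * c :=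
          mul_le_mul_left h c
      _ = (ENNReal.ofReal (Real.exp ε0) * c) * (Aldp (D j)).toOuterMeasure S := by ring
      _ = (Aldp (D j)).toOuterMeasure S := by
          rw [hc, ← ENNReal.ofReal_mul hE.le, ← Real.exp_add, add_neg_cancel,
            Real.exp_zero, ENNReal.ofReal_one, one_mul]
  have hsum : a * c ≤ ∑ j, w j * (Aldp (D j)).toOuterMeasure S := by
    calc a * c = (∑ j, w j) * (a * c) := by rw [hw, one_mul]
      _ = ∑ j, w j * (a * c) := by rw [Finset.sum_mul]
      _ ≤ ∑ j, w j * (Aldp (D j)).toOuterMeasure S :=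
          Finset.sum_le_sum fun j _ => mul_le_mul_right (hb j) _
  have key : a = ENNReal.ofReal (Real.exp ε0 / (1 + q * (Real.exp ε0 - 1))) *
      (ENNReal.ofReal q * a + ENNReal.ofReal (1 - q) * (a * c)) := by
    have h1 : ENNReal.ofReal q * a + ENNReal.ofReal (1 - q) * (a * c)
        = ENNReal.ofReal (q + (1 - q) * Real.exp (-ε0)) * a := by
      rw [ENNReal.ofReal_add hq0.le (mul_nonneg (by linarith) (Real.exp_pos _).le),
        ENNReal.ofReal_mul (by linarith)]
      ring
    rw [h1, ← mul_assoc, ← ENNReal.ofReal_mul (by positivity)]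
    have : Real.exp ε0 / (1 + q * (Real.exp ε0 - 1)) * (q + (1 - q) * Real.exp (-ε0)) = 1 := by
      rw [Real.exp_neg]
      field_simp
      ring
    rw [this, ENNReal.ofReal_one, one_mul]
  calc a = ENNReal.ofReal (Real.exp ε0 / (1 + q * (Real.exp ε0 - 1))) *
      (ENNReal.ofReal q * a + ENNReal.ofReal (1 - q) * (a * c)) := key
    _ ≤ _ := by
        gcongr


end
end

section
/- Throw n balls independently and uniformly at random into m bins, and let L = (L_1,…,L_m) be the resulting vector of bin loads. Then for every δ ∈ (0,1), with probability at least 1 − δ, the Euclidean norm of L satisfies ‖L‖₂ ≤ √(n + n²/m) + √(n·log(1/δ)). -/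
open MeasureTheory Real
open scoped ENNReal

universe u v

noncomputable section

section Aux

open Real

lemma hoeffding_scalar (p h : ℝ) (hp0 : 0 ≤ p) (hp1 : p ≤ 1) :
    (1 - p) * exp (-(p * h)) + p * exp ((1 - p) * h) ≤ exp (h ^ 2 / 8) := by
  rcases eq_or_lt_of_le hp0 with h0 | h0
  · simp [← h0, exp_nonneg, one_le_exp_iff]
    positivity
  rcases eq_or_lt_of_le hp1 with h1 | h1
  · simp [h1]
    positivity
  -- now 0 < p < 1
  set u : ℝ → ℝ := fun t => (1 - p) * exp (-(p * t)) + p * exp ((1 - p) * t) with hu_def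
  set v : ℝ → ℝ := fun t => p * (1 - p) * (exp ((1 - p) * t) - exp (-(p * t))) with hv_def
  set w : ℝ → ℝ := fun t => p * (1 - p) * ((1 - p) * exp ((1 - p) * t) + p * exp (-(p * t))) with hw_def
  have hupos : ∀ t, 0 < u t := by
    intro t
    have := exp_pos (-(p * t)); have := exp_pos ((1 - p) * t)
    simp only [hu_def]
    nlinarith
  have hu : ∀ t, HasDerivAt u (v t) t := by
    intro t
    have h1' : HasDerivAt (fun t : ℝ => -(p * t)) (-p) t := by
      simpa using ((hasDerivAt_id t).const_mul (-p))
    have h2' : HasDerivAt (fun t : ℝ => (1 - p) * t) (1 - p) t := by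
      simpa using ((hasDerivAt_id t).const_mul (1 - p))
    have e1 := (h1'.exp).const_mul (1 - p)
    have e2 := (h2'.exp).const_mul p
    refine (e1.add e2).congr_deriv ?_
    simp only [hv_def]; ring
  have hv : ∀ t, HasDerivAt v (w t) t := by
    intro t
    have h1' : HasDerivAt (fun t : ℝ => -(p * t)) (-p) t := by
      simpa using ((hasDerivAt_id t).const_mul (-p))
    have h2' : HasDerivAt (fun t : ℝ => (1 - p) * t) (1 - p) t := by
      simpa using ((hasDerivAt_id t).const_mul (1 - p))
    have e := ((h2'.exp).sub (h1'.exp)).const_mul (p * (1 - p))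
    refine e.congr_deriv ?_
    simp only [hw_def]; ring
  set G : ℝ → ℝ := fun t => t ^ 2 / 8 - log (u t) with hG_def
  set G1 : ℝ → ℝ := fun t => t / 4 - v t / u t with hG1_def
  have hG : ∀ t, HasDerivAt G (G1 t) t := by
    intro t
    have hl : HasDerivAt (fun t => log (u t)) (v t / u t) t :=
      (hu t).log (hupos t).ne'
    have hq : HasDerivAt (fun t : ℝ => t ^ 2 / 8) (t / 4) t := by
      have := ((hasDerivAt_pow 2 t).div_const 8)
      refine this.congr_deriv ?_; ring
    exact hq.sub hl
  have hG1 : ∀ t, HasDerivAt G1 (1 / 4 - (w t * u t - v t ^ 2) / (u t) ^ 2) t := by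
    intro t
    have hq : HasDerivAt (fun t : ℝ => t / 4) (1 / 4) t := by
      simpa using (hasDerivAt_id t).div_const 4
    have := hq.sub (((hv t).div (hu t)) (hupos t).ne')
    refine this.congr_deriv ?_; ring
  have hkey : ∀ t, 0 ≤ 1 / 4 - (w t * u t - v t ^ 2) / (u t) ^ 2 := by
    intro t
    set A := (1 - p) * exp (-(p * t)) with hA
    set B := p * exp ((1 - p) * t) with hB
    have hApos : 0 < A := by
      have := exp_pos (-(p * t)); nlinarith
    have hBpos : 0 < B := by
      have := exp_pos ((1 - p) * t); nlinarith
    have hwv : w t * u t - v t ^ 2 = A * B := by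
      simp only [hu_def, hv_def, hw_def, hA, hB]; ring
    have hu2 : u t = A + B := rfl
    rw [hwv, sub_nonneg, div_le_iff₀ (by positivity), hu2]
    nlinarith [sq_nonneg (A - B)]
  have hG1mono : Monotone G1 := by
    apply monotone_of_deriv_nonneg
    · intro t; exact (hG1 t).differentiableAt
    · intro t; rw [(hG1 t).deriv]; exact hkey t
  have hG10 : G1 0 = 0 := by simp [hG1_def, hv_def]
  have hGnonneg : 0 ≤ G h := by
    have hG0 : G 0 = 0 := by simp [hG_def, hu_def]
    rcases le_total 0 h with hh | hh
    · have : MonotoneOn G (Set.Ici 0) := by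
        apply monotoneOn_of_deriv_nonneg (convex_Ici 0)
        · exact fun t _ => (hG t).differentiableAt.continuousAt.continuousWithinAt
        · exact fun t _ => (hG t).differentiableAt.differentiableWithinAt
        · intro t ht
          rw [(hG t).deriv, ← hG10]
          exact hG1mono (le_of_lt (by simpa using ht))
      calc 0 = G 0 := hG0.symm
      _ ≤ G h := this (by simp) (by simpa using hh) hh
    · have : AntitoneOn G (Set.Iic 0) := by
        apply antitoneOn_of_deriv_nonpos (convex_Iic 0)
        · exact fun t _ => (hG t).differentiableAt.continuousAt.continuousWithinAt
        · exact fun t _ => (hG t).differentiableAt.differentiableWithinAt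
        · intro t ht
          rw [(hG t).deriv, ← hG10]
          exact hG1mono (le_of_lt (by simpa using ht))
      calc 0 = G 0 := hG0.symm
      _ ≤ G h := this (by simpa using hh) (by simp) hh
  have : log (u h) ≤ h ^ 2 / 8 := by
    simp only [hG_def] at hGnonneg; linarith
  calc u h = exp (log (u h)) := (exp_log (hupos h)).symm
  _ ≤ exp (h ^ 2 / 8) := exp_le_exp.mpr this

lemma hoeffding_fin {m : ℕ} (hm : 0 < m) (d : Fin m → ℝ) (c l : ℝ)
    (hsum : ∑ x, d x = 0) (hrange : ∀ x y, d x - d y ≤ c) :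
    ∑ x, exp (l * d x) ≤ m * exp (l ^ 2 * c ^ 2 / 8) := by
  haveI : Nonempty (Fin m) := Fin.pos_iff_nonempty.mp hm
  obtain ⟨xmin, -, hmin⟩ := Finset.exists_min_image Finset.univ d ⟨Classical.arbitrary _, Finset.mem_univ _⟩
  obtain ⟨xmax, -, hmax⟩ := Finset.exists_max_image Finset.univ d ⟨Classical.arbitrary _, Finset.mem_univ _⟩
  set a := d xmin with ha
  set b := d xmax with hb
  have hminle : ∀ x, a ≤ d x := fun x => hmin x (Finset.mem_univ x)
  have hmaxle : ∀ x, d x ≤ b := fun x => hmax x (Finset.mem_univ x)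
  have ha0 : a ≤ 0 := by
    by_contra hcon
    push_neg at hcon
    have : (0 : ℝ) < ∑ x, d x := by
      apply Finset.sum_pos (fun x _ => lt_of_lt_of_le hcon (hminle x)) ⟨_, Finset.mem_univ xmin⟩
    linarith [hsum ▸ this]
  have hb0 : 0 ≤ b := by
    by_contra hcon
    push_neg at hcon
    have : ∑ x, d x < 0 := by
      apply Finset.sum_neg (fun x _ => lt_of_le_of_lt (hmaxle x) hcon) ⟨_, Finset.mem_univ xmax⟩
    linarith [hsum ▸ this]
  have hba : b - a ≤ c := hrange xmax xmin
  have hc0 : 0 ≤ c := le_trans (by linarith) hba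
  rcases eq_or_lt_of_le (le_trans ha0 hb0 : a ≤ b) with hab | hab
  · -- all d x = 0
    have haz : a = 0 := le_antisymm ha0 (hab ▸ hb0)
    have hdx : ∀ x, d x = 0 := by
      intro x
      have h1 := hminle x; have h2 := hmaxle x
      rw [haz] at h1; rw [← hab, haz] at h2; linarith
    have : ∑ x : Fin m, exp (l * d x) = m := by
      rw [Finset.sum_congr rfl fun x _ => by rw [hdx x]]
      simp
    rw [this]
    have : (1:ℝ) ≤ exp (l ^ 2 * c ^ 2 / 8) := by
      rw [one_le_exp_iff]
      positivity
    nlinarith [(by exact_mod_cast hm : (0:ℝ) < m)]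
  · -- a < b
    have hbapos : (0:ℝ) < b - a := by linarith
    -- pointwise convexity bound
    have hpoint : ∀ x, (b - a) * exp (l * d x) ≤
        (b - d x) * exp (l * a) + (d x - a) * exp (l * b) := by
      intro x
      have hs1 : (0:ℝ) ≤ (b - d x) / (b - a) := by
        apply div_nonneg _ hbapos.le; linarith [hmaxle x]
      have hs2 : (0:ℝ) ≤ (d x - a) / (b - a) := by
        apply div_nonneg _ hbapos.le; linarith [hminle x]
      have hs3 : (b - d x) / (b - a) + (d x - a) / (b - a) = 1 := by
        field_simp; ring
      have hcv := convexOn_exp.2 (Set.mem_univ (l * a)) (Set.mem_univ (l * b)) hs1 hs2 hs3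
      simp only [smul_eq_mul] at hcv
      have harg : (b - d x) / (b - a) * (l * a) + (d x - a) / (b - a) * (l * b) = l * d x := by
        field_simp; ring
      rw [harg] at hcv
      calc (b - a) * exp (l * d x) ≤ (b - a) * ((b - d x) / (b - a) * exp (l * a) + (d x - a) / (b - a) * exp (l * b)) := by
            apply mul_le_mul_of_nonneg_left hcv hbapos.le
      _ = (b - d x) * exp (l * a) + (d x - a) * exp (l * b) := by field_simp
    -- sum the bound
    have hsum2 : (b - a) * ∑ x : Fin m, exp (l * d x) ≤
        m * (b * exp (l * a) - a * exp (l * b)) := by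
      rw [Finset.mul_sum]
      calc ∑ x : Fin m, (b - a) * exp (l * d x)
          ≤ ∑ x : Fin m, ((b - d x) * exp (l * a) + (d x - a) * exp (l * b)) :=
            Finset.sum_le_sum fun x _ => hpoint x
      _ = m * (b * exp (l * a) - a * exp (l * b)) := by
            rw [Finset.sum_add_distrib, ← Finset.sum_mul, ← Finset.sum_mul]
            rw [Finset.sum_sub_distrib, Finset.sum_sub_distrib, hsum]
            simp [Finset.sum_const, mul_comm]
            ring
    -- scalar Hoeffding
    have hscal := hoeffding_scalar (-a / (b - a)) (l * (b - a))
      (by apply div_nonneg _ hbapos.le; linarith) (by rw [div_le_one hbapos]; linarith)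
    have he1 : -(-a / (b - a) * (l * (b - a))) = l * a := by field_simp
    have he2 : (1 - -a / (b - a)) * (l * (b - a)) = l * b := by field_simp; ring
    rw [he1, he2] at hscal
    have hscal2 : b * exp (l * a) - a * exp (l * b) ≤ (b - a) * exp ((l * (b - a)) ^ 2 / 8) := by
      have h1' : 1 - -a / (b - a) = b / (b - a) := by field_simp; ring
      rw [h1'] at hscal
      calc b * exp (l * a) - a * exp (l * b)
          = (b - a) * (b / (b - a) * exp (l * a) + -a / (b - a) * exp (l * b)) := by
            field_simp; ring
      _ ≤ (b - a) * exp ((l * (b - a)) ^ 2 / 8) := by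
            apply mul_le_mul_of_nonneg_left hscal hbapos.le
    have hexple : exp ((l * (b - a)) ^ 2 / 8) ≤ exp (l ^ 2 * c ^ 2 / 8) := by
      apply exp_le_exp.mpr
      have : (b - a) ^ 2 ≤ c ^ 2 := by nlinarith
      nlinarith [sq_nonneg l]
    have hmpos : (0:ℝ) < m := Nat.cast_pos.mpr hm
    have hfinal : (b - a) * ∑ x : Fin m, exp (l * d x) ≤ (b - a) * (m * exp (l ^ 2 * c ^ 2 / 8)) := by
      calc (b - a) * ∑ x : Fin m, exp (l * d x)
          ≤ m * (b * exp (l * a) - a * exp (l * b)) := hsum2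
      _ ≤ m * ((b - a) * exp ((l * (b - a)) ^ 2 / 8)) := by
            apply mul_le_mul_of_nonneg_left hscal2 hmpos.le
      _ ≤ m * ((b - a) * exp (l ^ 2 * c ^ 2 / 8)) := by
            apply mul_le_mul_of_nonneg_left (mul_le_mul_of_nonneg_left hexple hbapos.le) hmpos.le
      _ = (b - a) * (m * exp (l ^ 2 * c ^ 2 / 8)) := by ring
    exact le_of_mul_le_mul_left hfinal hbapos

lemma mcdiarmid_exp {m : ℕ} (hm : 0 < m) (c : ℝ) :
    ∀ (n : ℕ) (f : (Fin n → Fin m) → ℝ),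
      (∀ (ω ω' : Fin n → Fin m) (j : Fin n), (∀ k, k ≠ j → ω k = ω' k) → f ω - f ω' ≤ c) →
      ∀ l : ℝ,
      ∑ ω : Fin n → Fin m, exp (l * f ω) ≤
        (m:ℝ) ^ n * exp (l * ((∑ ω : Fin n → Fin m, f ω) / (m:ℝ) ^ n) +
          n * (l ^ 2 * c ^ 2 / 8)) := by
  intro n
  induction n with
  | zero =>
      intro f _ l
      rw [Fintype.sum_unique, Fintype.sum_unique]
      simp
  | succ n ih =>
      intro f hf l
      have hmR : (0:ℝ) < m := by exact_mod_cast hm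
      set g : (Fin n → Fin m) → ℝ := fun τ => (∑ x : Fin m, f (Fin.cons x τ)) / m with hg
      -- rewrite the big sum via cons
      have hsum_eq : ∀ (F : (Fin (n+1) → Fin m) → ℝ),
          ∑ ω : Fin (n+1) → Fin m, F ω = ∑ τ : Fin n → Fin m, ∑ x : Fin m, F (Fin.cons x τ) := by
        intro F
        rw [← Equiv.sum_comp (Fin.consEquiv (fun _ : Fin (n+1) => Fin m)) F]
        rw [Fintype.sum_prod_type]
        rw [Finset.sum_comm]
        rfl
      -- inner Hoeffding step
      have hinner : ∀ τ : Fin n → Fin m,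
          ∑ x : Fin m, exp (l * f (Fin.cons x τ)) ≤
            (m:ℝ) * exp (l ^ 2 * c ^ 2 / 8) * exp (l * g τ) := by
        intro τ
        set d : Fin m → ℝ := fun x => f (Fin.cons x τ) - g τ with hd
        have hdsum : ∑ x, d x = 0 := by
          simp only [hd, Finset.sum_sub_distrib, Finset.sum_const, Finset.card_univ,
            Fintype.card_fin, nsmul_eq_mul, hg]
          field_simp; ring
        have hdrange : ∀ x y, d x - d y ≤ c := by
          intro x y
          have : f (Fin.cons x τ) - f (Fin.cons y τ) ≤ c := by
            apply hf _ _ 0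
            intro k hk
            have hk' : k = (k.pred hk).succ := (Fin.succ_pred k hk).symm
            rw [hk', Fin.cons_succ, Fin.cons_succ]
          simpa [hd] using this
        have hH := hoeffding_fin hm d c l hdsum hdrange
        calc ∑ x : Fin m, exp (l * f (Fin.cons x τ))
            = ∑ x : Fin m, exp (l * g τ) * exp (l * d x) := by
              apply Finset.sum_congr rfl
              intro x _
              rw [← Real.exp_add]
              congr 1
              simp only [hd]; ring
        _ = exp (l * g τ) * ∑ x : Fin m, exp (l * d x) := by rw [Finset.mul_sum]
        _ ≤ exp (l * g τ) * ((m:ℝ) * exp (l ^ 2 * c ^ 2 / 8)) := by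
              apply mul_le_mul_of_nonneg_left hH (exp_nonneg _)
        _ = (m:ℝ) * exp (l ^ 2 * c ^ 2 / 8) * exp (l * g τ) := by ring
      -- g is Lipschitz
      have hgf : ∀ (τ τ' : Fin n → Fin m) (j : Fin n), (∀ k, k ≠ j → τ k = τ' k) →
          g τ - g τ' ≤ c := by
        intro τ τ' j hj
        have : ∑ x : Fin m, (f (Fin.cons x τ) - f (Fin.cons x τ')) ≤ ∑ _x : Fin m, c := by
          apply Finset.sum_le_sum
          intro x _
          apply hf _ _ j.succ
          intro k hk
          by_cases hk0 : k = 0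
          · subst hk0; simp
          · have hk' : k = (k.pred hk0).succ := (Fin.succ_pred k hk0).symm
            rw [hk', Fin.cons_succ, Fin.cons_succ]
            congr 1
            apply hj
            intro hcontra
            apply hk
            rw [hk', hcontra]
        simp only [Finset.sum_sub_distrib, Finset.sum_const, Finset.card_univ,
          Fintype.card_fin, nsmul_eq_mul] at this
        simp only [hg]
        rw [div_sub_div_same, div_le_iff₀ hmR]
        linarith [this]
      have hIH := ih g hgf l
      -- sum of g
      have hgsum : ∑ τ : Fin n → Fin m, g τ = (∑ ω : Fin (n+1) → Fin m, f ω) / m := by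
        rw [hsum_eq f]
        simp only [hg]
        rw [Finset.sum_div]
      calc ∑ ω : Fin (n+1) → Fin m, exp (l * f ω)
          = ∑ τ : Fin n → Fin m, ∑ x : Fin m, exp (l * f (Fin.cons x τ)) :=
            hsum_eq (fun ω => exp (l * f ω))
      _ ≤ ∑ τ : Fin n → Fin m, (m:ℝ) * exp (l ^ 2 * c ^ 2 / 8) * exp (l * g τ) :=
            Finset.sum_le_sum fun τ _ => hinner τ
      _ = (m:ℝ) * exp (l ^ 2 * c ^ 2 / 8) * ∑ τ : Fin n → Fin m, exp (l * g τ) := by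
            rw [← Finset.mul_sum]
      _ ≤ (m:ℝ) * exp (l ^ 2 * c ^ 2 / 8) *
            ((m:ℝ) ^ n * exp (l * ((∑ τ : Fin n → Fin m, g τ) / (m:ℝ) ^ n) +
              n * (l ^ 2 * c ^ 2 / 8))) := by
            apply mul_le_mul_of_nonneg_left hIH (by positivity)
      _ = (m:ℝ) ^ (n+1) * exp (l * ((∑ ω : Fin (n+1) → Fin m, f ω) / (m:ℝ) ^ (n+1)) +
            ((n:ℝ)+1) * (l ^ 2 * c ^ 2 / 8)) := by
            rw [hgsum, div_div, ← pow_succ']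
            rw [show ((n:ℝ)+1) * (l ^ 2 * c ^ 2 / 8) =
              (l ^ 2 * c ^ 2 / 8) + (n:ℝ) * (l ^ 2 * c ^ 2 / 8) from by ring]
            simp only [Real.exp_add]
            rw [pow_succ]
            ring
      _ = (m:ℝ) ^ (n+1) * exp (l * ((∑ ω : Fin (n+1) → Fin m, f ω) / (m:ℝ) ^ (n+1)) +
            ((n+1 : ℕ):ℝ) * (l ^ 2 * c ^ 2 / 8)) := by norm_cast

lemma sqrt_sum_sq_triangle {ι : Type*} (s : Finset ι) (a b : ι → ℝ) :
    Real.sqrt (∑ i ∈ s, a i ^ 2) ≤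
      Real.sqrt (∑ i ∈ s, b i ^ 2) + Real.sqrt (∑ i ∈ s, (a i - b i) ^ 2) := by
  set B := Real.sqrt (∑ i ∈ s, b i ^ 2) with hBdef
  set C := Real.sqrt (∑ i ∈ s, (a i - b i) ^ 2) with hCdef
  have hB0 : 0 ≤ B := Real.sqrt_nonneg _
  have hC0 : 0 ≤ C := Real.sqrt_nonneg _
  have hB : B ^ 2 = ∑ i ∈ s, b i ^ 2 :=
    Real.sq_sqrt (Finset.sum_nonneg fun i _ => sq_nonneg _)
  have hC : C ^ 2 = ∑ i ∈ s, (a i - b i) ^ 2 :=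
    Real.sq_sqrt (Finset.sum_nonneg fun i _ => sq_nonneg _)
  have hcs : ∑ i ∈ s, b i * (a i - b i) ≤ B * C := by
    have h1 := Finset.sum_mul_sq_le_sq_mul_sq s b (fun i => a i - b i)
    have h2 : (∑ i ∈ s, b i * (a i - b i)) ^ 2 ≤ (B * C) ^ 2 := by
      rw [mul_pow, hB, hC]; exact h1
    calc ∑ i ∈ s, b i * (a i - b i) ≤ |∑ i ∈ s, b i * (a i - b i)| := le_abs_self _
    _ = Real.sqrt ((∑ i ∈ s, b i * (a i - b i)) ^ 2) := (Real.sqrt_sq_eq_abs _).symm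
    _ ≤ Real.sqrt ((B * C) ^ 2) := Real.sqrt_le_sqrt h2
    _ = |B * C| := Real.sqrt_sq_eq_abs _
    _ = B * C := abs_of_nonneg (by positivity)
  have hexp : ∑ i ∈ s, a i ^ 2 ≤ (B + C) ^ 2 := by
    have hpt : ∀ i ∈ s, a i ^ 2 = (b i ^ 2 + 2 * (b i * (a i - b i))) + (a i - b i) ^ 2 :=
      fun i _ => by ring
    have : ∑ i ∈ s, a i ^ 2 =
        (∑ i ∈ s, b i ^ 2) + 2 * (∑ i ∈ s, b i * (a i - b i)) + ∑ i ∈ s, (a i - b i) ^ 2 := by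
      rw [Finset.sum_congr rfl hpt, Finset.sum_add_distrib, Finset.sum_add_distrib,
        ← Finset.mul_sum]
    rw [this, ← hB, ← hC]
    nlinarith [hcs]
  calc Real.sqrt (∑ i ∈ s, a i ^ 2) ≤ Real.sqrt ((B + C) ^ 2) := Real.sqrt_le_sqrt hexp
  _ = |B + C| := Real.sqrt_sq_eq_abs _
  _ = B + C := abs_of_nonneg (by positivity)

-- Lipschitz property of the load-norm function
lemma load_lip (n m : ℕ) (ω ω' : Fin n → Fin m) (j : Fin n)
    (h : ∀ k, k ≠ j → ω k = ω' k) :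
    Real.sqrt (∑ i : Fin m, ((Finset.univ.filter fun j' : Fin n => ω j' = i).card : ℝ) ^ 2)
      - Real.sqrt (∑ i : Fin m, ((Finset.univ.filter fun j' : Fin n => ω' j' = i).card : ℝ) ^ 2)
      ≤ Real.sqrt 2 := by
  set a : Fin m → ℝ := fun i => ((Finset.univ.filter fun j' : Fin n => ω j' = i).card : ℝ)
  set b : Fin m → ℝ := fun i => ((Finset.univ.filter fun j' : Fin n => ω' j' = i).card : ℝ)
  have hcard : ∀ (ψ : Fin n → Fin m) (i : Fin m),
      ((Finset.univ.filter fun k => ψ k = i).card : ℝ) =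
        ∑ k : Fin n, if ψ k = i then (1:ℝ) else 0 := by
    intro ψ i
    rw [Finset.card_filter, Nat.cast_sum]
    simp only [Nat.cast_ite, Nat.cast_one, Nat.cast_zero]
  have hdiff : ∀ i, a i - b i =
      (if ω j = i then (1:ℝ) else 0) - (if ω' j = i then (1:ℝ) else 0) := by
    intro i
    simp only [a, b, hcard, ← Finset.sum_sub_distrib]
    rw [Finset.sum_eq_single j]
    · intro k _ hk
      rw [h k hk]; ring
    · intro hj; exact absurd (Finset.mem_univ j) hj
  have hsumdiff : ∑ i : Fin m, (a i - b i) ^ 2 ≤ 2 := by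
    have hle : ∀ i, (a i - b i) ^ 2 ≤
        (if ω j = i then (1:ℝ) else 0) + (if ω' j = i then (1:ℝ) else 0) := by
      intro i
      rw [hdiff i]
      by_cases h1 : ω j = i <;> by_cases h2 : ω' j = i <;> simp [h1, h2] <;> norm_num
    calc ∑ i : Fin m, (a i - b i) ^ 2
        ≤ ∑ i : Fin m, ((if ω j = i then (1:ℝ) else 0) + (if ω' j = i then (1:ℝ) else 0)) :=
          Finset.sum_le_sum fun i _ => hle i
    _ = 2 := by
        rw [Finset.sum_add_distrib, Finset.sum_ite_eq, Finset.sum_ite_eq]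
        norm_num
  have htri := sqrt_sum_sq_triangle Finset.univ a b
  have hs2 : Real.sqrt (∑ i : Fin m, (a i - b i) ^ 2) ≤ Real.sqrt 2 := Real.sqrt_le_sqrt hsumdiff
  have h2 : Real.sqrt (∑ i : Fin m, b i ^ 2) + Real.sqrt (∑ i : Fin m, (a i - b i) ^ 2) ≤
      Real.sqrt (∑ i : Fin m, b i ^ 2) + Real.sqrt 2 := by linarith
  have h3 := htri.trans h2
  simp only [a, b] at h3
  linarith

lemma count_collision (n m : ℕ) (j k : Fin n) (hjk : j ≠ k) :
    ∑ ω : Fin n → Fin m, (if ω j = ω k then (1:ℝ) else 0) = (m:ℝ) ^ (n - 1) := by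
  rw [← Equiv.sum_comp (Equiv.piSplitAt k (fun _ : Fin n => Fin m)).symm
    (fun ω => if ω j = ω k then (1:ℝ) else 0)]
  rw [Fintype.sum_prod_type]
  have hval : ∀ (x : Fin m) (ρ : {l : Fin n // l ≠ k} → Fin m),
      ((Equiv.piSplitAt k (fun _ : Fin n => Fin m)).symm (x, ρ)) j = ρ ⟨j, hjk⟩ ∧
      ((Equiv.piSplitAt k (fun _ : Fin n => Fin m)).symm (x, ρ)) k = x := by
    intro x ρ
    constructor
    · rw [Equiv.piSplitAt_symm_apply]
      simp [hjk]
    · rw [Equiv.piSplitAt_symm_apply]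
      simp
  have : ∀ x : Fin m, ∑ ρ : {l : Fin n // l ≠ k} → Fin m,
      (if ((Equiv.piSplitAt k (fun _ : Fin n => Fin m)).symm (x, ρ)) j =
          ((Equiv.piSplitAt k (fun _ : Fin n => Fin m)).symm (x, ρ)) k then (1:ℝ) else 0) =
      ∑ ρ : {l : Fin n // l ≠ k} → Fin m, (if ρ ⟨j, hjk⟩ = x then (1:ℝ) else 0) := by
    intro x
    apply Finset.sum_congr rfl
    intro ρ _
    rw [(hval x ρ).1, (hval x ρ).2]
  rw [Finset.sum_congr rfl fun x _ => this x]
  rw [Finset.sum_comm]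
  have hinner : ∀ ρ : {l : Fin n // l ≠ k} → Fin m,
      ∑ x : Fin m, (if ρ ⟨j, hjk⟩ = x then (1:ℝ) else 0) = 1 := by
    intro ρ
    rw [Finset.sum_ite_eq]
    simp
  rw [Finset.sum_congr rfl fun ρ _ => hinner ρ, Finset.sum_const, Finset.card_univ]
  have hcard : Fintype.card ({l : Fin n // l ≠ k} → Fin m) = m ^ (n - 1) := by
    rw [Fintype.card_fun, Fintype.card_fin]
    congr 1
    have : Fintype.card {l : Fin n // ¬ (l = k)} = n - 1 := by
      rw [Fintype.card_subtype_compl, Fintype.card_subtype_eq, Fintype.card_fin]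
    exact this
  rw [hcard]
  simp

lemma second_moment (n m : ℕ) (hm : 0 < m) :
    ∑ ω : Fin n → Fin m, ∑ i : Fin m,
      ((Finset.univ.filter fun j' : Fin n => ω j' = i).card : ℝ) ^ 2 ≤
    (m:ℝ) ^ n * ((n:ℝ) + (n:ℝ) ^ 2 / (m:ℝ)) := by
  have hmR : (0:ℝ) < m := by exact_mod_cast hm
  -- pointwise identity
  have hpt : ∀ ω : Fin n → Fin m,
      ∑ i : Fin m, ((Finset.univ.filter fun j' : Fin n => ω j' = i).card : ℝ) ^ 2 =
      ∑ j : Fin n, ∑ k : Fin n, (if ω j = ω k then (1:ℝ) else 0) := by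
    intro ω
    have hcard : ∀ i : Fin m,
        ((Finset.univ.filter fun j' : Fin n => ω j' = i).card : ℝ) =
          ∑ j : Fin n, if ω j = i then (1:ℝ) else 0 := by
      intro i
      rw [Finset.card_filter, Nat.cast_sum]
      simp only [Nat.cast_ite, Nat.cast_one, Nat.cast_zero]
    calc ∑ i : Fin m, ((Finset.univ.filter fun j' : Fin n => ω j' = i).card : ℝ) ^ 2
        = ∑ i : Fin m, ∑ j : Fin n, ∑ k : Fin n,
            (if ω j = i then (1:ℝ) else 0) * (if ω k = i then (1:ℝ) else 0) := by
          apply Finset.sum_congr rfl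
          intro i _
          rw [hcard i, sq, Finset.sum_mul_sum]
    _ = ∑ j : Fin n, ∑ k : Fin n, ∑ i : Fin m,
            (if ω j = i then (1:ℝ) else 0) * (if ω k = i then (1:ℝ) else 0) := by
          rw [Finset.sum_comm]
          apply Finset.sum_congr rfl
          intro j _
          rw [Finset.sum_comm]
    _ = ∑ j : Fin n, ∑ k : Fin n, (if ω j = ω k then (1:ℝ) else 0) := by
          apply Finset.sum_congr rfl; intro j _
          apply Finset.sum_congr rfl; intro k _
          by_cases h : ω j = ω k
          · rw [if_pos h]
            rw [Finset.sum_eq_single (ω j)]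
            · simp [h]
            · intro i _ hi
              rw [if_neg (show ¬ ω j = i from fun hc => hi hc.symm), zero_mul]
            · intro habs; exact absurd (Finset.mem_univ _) habs
          · rw [if_neg h]
            apply Finset.sum_eq_zero
            intro i _
            by_cases h1 : ω j = i
            · rw [if_pos h1, if_neg (show ¬ ω k = i from fun hc => h (h1.trans hc.symm)),
                one_mul]
            · rw [if_neg h1, zero_mul]

  rw [Finset.sum_congr rfl fun ω _ => hpt ω]
  rw [Finset.sum_comm]
  have hswap : ∀ j : Fin n, ∑ ω : Fin n → Fin m, ∑ k : Fin n, (if ω j = ω k then (1:ℝ) else 0)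
      = ∑ k : Fin n, ∑ ω : Fin n → Fin m, (if ω j = ω k then (1:ℝ) else 0) :=
    fun j => Finset.sum_comm
  rw [Finset.sum_congr rfl fun j _ => hswap j]
  have hterm : ∀ j k : Fin n, ∑ ω : Fin n → Fin m, (if ω j = ω k then (1:ℝ) else 0) ≤
      if j = k then (m:ℝ) ^ n else (m:ℝ) ^ (n - 1) := by
    intro j k
    by_cases hjk : j = k
    · rw [if_pos hjk]
      subst hjk
      simp only [if_pos rfl]
      rw [Finset.sum_const, Finset.card_univ, Fintype.card_fun, Fintype.card_fin]
      simp
    · rw [if_neg hjk, count_collision n m j k hjk]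
  calc ∑ j : Fin n, ∑ k : Fin n, ∑ ω : Fin n → Fin m, (if ω j = ω k then (1:ℝ) else 0)
      ≤ ∑ j : Fin n, ∑ k : Fin n, (if j = k then (m:ℝ) ^ n else (m:ℝ) ^ (n - 1)) :=
        Finset.sum_le_sum fun j _ => Finset.sum_le_sum fun k _ => hterm j k
  _ ≤ (m:ℝ) ^ n * ((n:ℝ) + (n:ℝ) ^ 2 / (m:ℝ)) := by
      rcases Nat.eq_zero_or_pos n with hn | hn
      · subst hn; simp
      have hsum1 : ∀ j : Fin n, ∑ k : Fin n, (if j = k then (m:ℝ) ^ n else (m:ℝ) ^ (n - 1))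
          = (m:ℝ) ^ n + ((n:ℝ) - 1) * (m:ℝ) ^ (n - 1) := by
        intro j
        have hsplit : ∀ k : Fin n, (if j = k then (m:ℝ) ^ n else (m:ℝ) ^ (n - 1)) =
            (m:ℝ) ^ (n - 1) + (if j = k then (m:ℝ) ^ n - (m:ℝ) ^ (n - 1) else 0) := by
          intro k; by_cases h : j = k <;> simp [h]
        rw [Finset.sum_congr rfl fun k _ => hsplit k, Finset.sum_add_distrib,
          Finset.sum_const, Finset.card_univ, Fintype.card_fin, Finset.sum_ite_eq,
          nsmul_eq_mul]
        simp only [Finset.mem_univ, if_pos]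
        ring
      rw [Finset.sum_congr rfl fun j _ => hsum1 j, Finset.sum_const, Finset.card_univ,
        Fintype.card_fin, nsmul_eq_mul]
      have hpow : (m:ℝ) ^ (n - 1) * m = (m:ℝ) ^ n := by
        rw [← pow_succ]
        congr 1
        omega
      have hdiv : (m:ℝ) ^ n * ((n:ℝ) ^ 2 / m) = (n:ℝ) ^ 2 * (m:ℝ) ^ (n - 1) := by
        rw [← hpow]
        field_simp
      have hn1 : (1:ℝ) ≤ (n:ℝ) := by exact_mod_cast hn
      have hpp : (0:ℝ) < (m:ℝ) ^ (n - 1) := pow_pos hmR _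
      nlinarith [hpp, hn1, hdiv]


lemma pmfPi_uniform_apply (m : ℕ) (hm : 0 < m) :
    ∀ (n : ℕ) (ω : Fin n → Fin m),
      (pmfPi n fun _ => uniformFin m hm) ω = ((m : ℝ≥0∞) ^ n)⁻¹ := by
  intro n
  induction n with
  | zero =>
      intro ω
      show (PMF.pure (fun i => i.elim0) : PMF (Fin 0 → Fin m)) ω = _
      rw [PMF.pure_apply, if_pos (by funext i; exact i.elim0)]
      simp
  | succ n ih =>
      intro ω
      show ((uniformFin m hm).bind fun x =>
        (pmfPi n fun _ => uniformFin m hm).bind fun xs => PMF.pure (Fin.cons x xs)) ω = _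
      rw [PMF.bind_apply, tsum_fintype]
      have huni : ∀ x : Fin m, (uniformFin m hm) x = (m : ℝ≥0∞)⁻¹ := by
        intro x
        simp [uniformFin, PMF.uniformOfFintype_apply]
      have hinner : ∀ x : Fin m,
          ((pmfPi n fun _ => uniformFin m hm).bind fun xs => PMF.pure (Fin.cons x xs)) ω =
            if x = ω 0 then ((m : ℝ≥0∞) ^ n)⁻¹ else 0 := by
        intro x
        rw [PMF.bind_apply, tsum_fintype]
        by_cases hx : x = ω 0
        · subst hx
          rw [if_pos rfl]
          rw [Finset.sum_eq_single (Fin.tail ω)]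
          · rw [ih, PMF.pure_apply, if_pos (Fin.cons_self_tail ω).symm, mul_one]
          · intro xs _ hxs
            rw [PMF.pure_apply, if_neg, mul_zero]
            intro hcon
            apply hxs
            funext i
            have := congrFun hcon i.succ
            simpa [Fin.tail] using this.symm
          · intro h; exact absurd (Finset.mem_univ _) h
        · rw [if_neg hx]
          apply Finset.sum_eq_zero
          intro xs _
          rw [PMF.pure_apply, if_neg, mul_zero]
          intro hcon
          apply hx
          have := congrFun hcon 0
          simpa using this.symm
      rw [Finset.sum_congr rfl fun x _ => by rw [huni x, hinner x]]
      have hss : ∑ x : Fin m, (m : ℝ≥0∞)⁻¹ * (if x = ω 0 then ((m : ℝ≥0∞) ^ n)⁻¹ else 0) =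
          (m : ℝ≥0∞)⁻¹ * ((m : ℝ≥0∞) ^ n)⁻¹ := by
        rw [← Finset.mul_sum]
        congr 1
        rw [Finset.sum_ite_eq']
        simp
      rw [hss, ENNReal.inv_pow, ENNReal.inv_pow, pow_succ']

end Aux

/-- **Lemma A.13 (Balls in bins, ℓ₂ norm of the loads).** Throw `n` balls independently
and uniformly into `m` bins and let `L_i` be the load of bin `i`. Then with probability
at least `1 - δ`, `‖L‖₂ ≤ √(n + n²/m) + √(n log(1/δ))`. -/
theorem balls_in_bins_l2_norm
    (n m : ℕ) (hm : 0 < m) (δ : ℝ) (hδ : δ ∈ Set.Ioo (0 : ℝ) 1) :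
    ENNReal.ofReal (1 - δ) ≤
      (pmfPi n fun _ => uniformFin m hm).toOuterMeasure
        {ω : Fin n → Fin m |
          Real.sqrt (∑ i : Fin m,
              ((Finset.univ.filter fun j : Fin n => ω j = i).card : ℝ) ^ 2) ≤
            Real.sqrt (n + n ^ 2 / m) + Real.sqrt (n * Real.log (1 / δ))} := by
  classical
  obtain ⟨hd0, hd1⟩ := hδ
  have hmR : (0:ℝ) < m := by exact_mod_cast hm
  set f : (Fin n → Fin m) → ℝ := fun ω =>
    Real.sqrt (∑ i : Fin m,
      ((Finset.univ.filter fun j : Fin n => ω j = i).card : ℝ) ^ 2) with hfdef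
  set B : ℝ := Real.sqrt (n + n ^ 2 / m) + Real.sqrt (n * Real.log (1 / δ)) with hBdef
  show ENNReal.ofReal (1 - δ) ≤
      (pmfPi n fun _ => uniformFin m hm).toOuterMeasure {ω | f ω ≤ B}
  set good : Finset (Fin n → Fin m) := Finset.univ.filter (fun ω => f ω ≤ B) with hgood
  set bad : Finset (Fin n → Fin m) := Finset.univ.filter (fun ω => ¬ f ω ≤ B) with hbad
  -- measure of the event
  have hmeas : (pmfPi n fun _ => uniformFin m hm).toOuterMeasure {ω | f ω ≤ B} =
      (good.card : ℝ≥0∞) * (((m:ℝ≥0∞)) ^ n)⁻¹ := by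
    rw [PMF.toOuterMeasure_apply, tsum_fintype]
    have hind : ∀ ω : Fin n → Fin m,
        Set.indicator {ω | f ω ≤ B} (⇑(pmfPi n fun _ => uniformFin m hm)) ω =
          if f ω ≤ B then ((m:ℝ≥0∞) ^ n)⁻¹ else 0 := by
      intro ω
      rw [Set.indicator_apply]
      by_cases h : f ω ≤ B
      · rw [if_pos h, if_pos (show ω ∈ {ω | f ω ≤ B} from h), pmfPi_uniform_apply]
      · rw [if_neg h, if_neg (show ω ∉ {ω | f ω ≤ B} from h)]
    rw [Finset.sum_congr rfl fun ω _ => hind ω, ← Finset.sum_filter, Finset.sum_const,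
      nsmul_eq_mul]
  rw [hmeas]
  -- the count bound : card bad ≤ δ * m^n
  have hcards : (good.card : ℝ) + (bad.card : ℝ) = (m:ℝ) ^ n := by
    have := Finset.card_filter_add_card_filter_not
      (s := (Finset.univ : Finset (Fin n → Fin m))) (p := fun ω => f ω ≤ B)
    rw [Finset.card_univ, Fintype.card_fun, Fintype.card_fin, Fintype.card_fin] at this
    exact_mod_cast this
  have hbadbound : (bad.card : ℝ) ≤ δ * (m:ℝ) ^ n := by
    rcases Nat.eq_zero_or_pos n with hn0 | hn0
    · have hbade : bad = ∅ := by
        subst hn0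
        rw [hbad]
        apply Finset.filter_false_of_mem
        intro ω _
        rw [not_not]
        have hf0 : f ω = 0 := by simp [hfdef]
        rw [hf0, hBdef]
        positivity
      rw [hbade]
      simp only [Finset.card_empty, Nat.cast_zero]
      positivity
    -- main case n ≥ 1
    have hnR : (0:ℝ) < n := by exact_mod_cast hn0
    have hlog : 0 < Real.log (1 / δ) := Real.log_pos (by rw [lt_div_iff₀ hd0]; linarith)
    set t : ℝ := Real.sqrt (n * Real.log (1 / δ)) with htdef
    have ht : 0 < t := Real.sqrt_pos.mpr (by positivity)
    have ht2 : t ^ 2 = n * Real.log (1 / δ) := Real.sq_sqrt (by positivity)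
    set l : ℝ := 2 * t / n with hldef
    have hl : 0 < l := by positivity
    -- Lipschitz
    have hlip : ∀ (ω ω' : Fin n → Fin m) (j : Fin n),
        (∀ k, k ≠ j → ω k = ω' k) → f ω - f ω' ≤ Real.sqrt 2 := by
      intro ω ω' j h
      exact load_lip n m ω ω' j h
    have hmc := mcdiarmid_exp hm (Real.sqrt 2) n f hlip l
    set μ : ℝ := (∑ ω : Fin n → Fin m, f ω) / (m:ℝ) ^ n with hμdef
    -- mean bound
    have hmean : μ ≤ Real.sqrt (n + n ^ 2 / m) := by
      have hEf0 : 0 ≤ ∑ ω : Fin n → Fin m, f ω :=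
        Finset.sum_nonneg fun ω _ => Real.sqrt_nonneg _
      have hcs := Finset.sum_mul_sq_le_sq_mul_sq Finset.univ f
        (fun _ : Fin n → Fin m => (1:ℝ))
      simp only [mul_one, one_pow, Finset.sum_const, Finset.card_univ, Fintype.card_fun,
        Fintype.card_fin, nsmul_eq_mul, mul_one] at hcs
      have hsq : ∀ ω : Fin n → Fin m, f ω ^ 2 = ∑ i : Fin m,
          ((Finset.univ.filter fun j : Fin n => ω j = i).card : ℝ) ^ 2 := by
        intro ω
        rw [hfdef]
        exact Real.sq_sqrt (Finset.sum_nonneg fun i _ => sq_nonneg _)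
      have hsm := second_moment n m hm
      have h2 : (∑ ω : Fin n → Fin m, f ω) ^ 2 ≤
          ((m:ℝ) ^ n) ^ 2 * ((n:ℝ) + (n:ℝ) ^ 2 / m) := by
        calc (∑ ω : Fin n → Fin m, f ω) ^ 2
            ≤ (∑ ω : Fin n → Fin m, f ω ^ 2) * (m:ℝ) ^ n := by exact_mod_cast hcs
        _ = (∑ ω : Fin n → Fin m, ∑ i : Fin m,
              ((Finset.univ.filter fun j : Fin n => ω j = i).card : ℝ) ^ 2) * (m:ℝ) ^ n := by
              rw [Finset.sum_congr rfl fun ω _ => hsq ω]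
        _ ≤ ((m:ℝ) ^ n * ((n:ℝ) + (n:ℝ) ^ 2 / m)) * (m:ℝ) ^ n := by
              apply mul_le_mul_of_nonneg_right hsm (by positivity)
        _ = ((m:ℝ) ^ n) ^ 2 * ((n:ℝ) + (n:ℝ) ^ 2 / m) := by ring
      have hrt : Real.sqrt (n + n ^ 2 / m) ^ 2 = (n:ℝ) + (n:ℝ) ^ 2 / m :=
        Real.sq_sqrt (by positivity)
      have hmpow : (0:ℝ) < (m:ℝ) ^ n := by positivity
      rw [hμdef, div_le_iff₀ hmpow]
      have hRP2 : (Real.sqrt (n + n ^ 2 / m) * (m:ℝ) ^ n) ^ 2 =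
          ((m:ℝ) ^ n) ^ 2 * ((n:ℝ) + (n:ℝ) ^ 2 / m) := by
        rw [mul_pow, hrt]; ring
      have hRP0 : 0 ≤ Real.sqrt (n + n ^ 2 / m) * (m:ℝ) ^ n := by positivity
      nlinarith [h2, hRP2, hRP0, hEf0]
    -- Chernoff
    have hchain : (bad.card : ℝ) * Real.exp (l * B) ≤
        (m:ℝ) ^ n * Real.exp (l * μ + n * (l ^ 2 * Real.sqrt 2 ^ 2 / 8)) := by
      calc (bad.card : ℝ) * Real.exp (l * B)
          = ∑ _ω ∈ bad, Real.exp (l * B) := by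
            rw [Finset.sum_const, nsmul_eq_mul]
      _ ≤ ∑ ω ∈ bad, Real.exp (l * f ω) := by
            apply Finset.sum_le_sum
            intro ω hω
            have hωb : ¬ f ω ≤ B := (Finset.mem_filter.mp hω).2
            exact Real.exp_le_exp.mpr
              (mul_le_mul_of_nonneg_left (le_of_lt (lt_of_not_ge hωb)) hl.le)
      _ ≤ ∑ ω : Fin n → Fin m, Real.exp (l * f ω) :=
            Finset.sum_le_sum_of_subset_of_nonneg (Finset.filter_subset _ _)
              (fun ω _ _ => (Real.exp_pos _).le)
      _ ≤ (m:ℝ) ^ n * Real.exp (l * μ + n * (l ^ 2 * Real.sqrt 2 ^ 2 / 8)) := hmc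
    have hs2 : Real.sqrt 2 ^ 2 = 2 := Real.sq_sqrt (by norm_num)
    have hexparg : l * μ + (n:ℝ) * (l ^ 2 * Real.sqrt 2 ^ 2 / 8) - l * B ≤ Real.log δ := by
      rw [hs2]
      have hmono : l * μ ≤ l * Real.sqrt (n + n ^ 2 / m) :=
        mul_le_mul_of_nonneg_left hmean hl.le
      have harith : (n:ℝ) * (l ^ 2 * 2 / 8) - l * t = -(t ^ 2 / n) := by
        rw [hldef]
        field_simp
        ring
      have hlogd : t ^ 2 / n = Real.log (1 / δ) := by
        rw [ht2]
        field_simp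
      have hloginv : Real.log (1 / δ) = - Real.log δ := by
        rw [one_div, Real.log_inv]
      have hBexp : B = Real.sqrt (n + n ^ 2 / m) + t := by rw [hBdef, htdef]
      rw [hBexp]
      have : l * μ + (n:ℝ) * (l ^ 2 * 2 / 8) - l * (Real.sqrt (n + n ^ 2 / m) + t) ≤
          (n:ℝ) * (l ^ 2 * 2 / 8) - l * t := by linarith
      calc l * μ + (n:ℝ) * (l ^ 2 * 2 / 8) - l * (Real.sqrt (n + n ^ 2 / m) + t)
          ≤ (n:ℝ) * (l ^ 2 * 2 / 8) - l * t := this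
      _ = -(t ^ 2 / n) := harith
      _ = Real.log δ := by rw [hlogd, hloginv]; ring
    have hfinal : (bad.card : ℝ) ≤ δ * (m:ℝ) ^ n := by
      have h1 : (bad.card : ℝ) ≤
          (m:ℝ) ^ n * Real.exp (l * μ + n * (l ^ 2 * Real.sqrt 2 ^ 2 / 8)) / Real.exp (l * B) := by
        rw [le_div_iff₀ (Real.exp_pos _)]
        exact hchain
      have h2 : (m:ℝ) ^ n * Real.exp (l * μ + n * (l ^ 2 * Real.sqrt 2 ^ 2 / 8)) /
          Real.exp (l * B) =
          (m:ℝ) ^ n * Real.exp (l * μ + n * (l ^ 2 * Real.sqrt 2 ^ 2 / 8) - l * B) := by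
        rw [Real.exp_sub]
        ring
      have h3 : Real.exp (l * μ + n * (l ^ 2 * Real.sqrt 2 ^ 2 / 8) - l * B) ≤ δ := by
        calc Real.exp (l * μ + n * (l ^ 2 * Real.sqrt 2 ^ 2 / 8) - l * B)
            ≤ Real.exp (Real.log δ) := Real.exp_le_exp.mpr hexparg
        _ = δ := Real.exp_log hd0
      calc (bad.card : ℝ)
          ≤ (m:ℝ) ^ n * Real.exp (l * μ + n * (l ^ 2 * Real.sqrt 2 ^ 2 / 8) - l * B) := by
            rw [← h2]; exact h1
      _ ≤ (m:ℝ) ^ n * δ := mul_le_mul_of_nonneg_left h3 (by positivity)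
      _ = δ * (m:ℝ) ^ n := by ring
    exact hfinal
  -- convert to ENNReal
  have hgoodge : (1 - δ) * (m:ℝ) ^ n ≤ (good.card : ℝ) := by nlinarith [hcards, hbadbound]
  have hreal : 1 - δ ≤ (good.card : ℝ) / (m:ℝ) ^ n := by
    rw [le_div_iff₀ (by positivity)]
    exact hgoodge
  have hconv : (good.card : ℝ≥0∞) * (((m:ℝ≥0∞)) ^ n)⁻¹ =
      ENNReal.ofReal ((good.card : ℝ) / (m:ℝ) ^ n) := by
    rw [ENNReal.ofReal_div_of_pos (by positivity)]
    rw [ENNReal.ofReal_natCast]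
    have hpow : ENNReal.ofReal ((m:ℝ) ^ n) = (m:ℝ≥0∞) ^ n := by
      rw [ENNReal.ofReal_pow (by positivity), ENNReal.ofReal_natCast]
    rw [hpow, ENNReal.div_eq_inv_mul, mul_comm]
  rw [hconv]
  exact ENNReal.ofReal_le_ofReal hreal


end
end
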